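/- arXiv:2004.09656 — 7 statements merged into one kernel-verified Lean document; each statement's English description precedes it below -/
import Mathlib

section
/- For any probability distribution p on a finite set S with support of cardinality K ≥ 1, (∑_{x∈S} √(p(x)(1−p(x))))² ≤ K − 1. -/
open Finset

lemma sq_sum_sqrt_le_card_mul_sum {ι : Type*} (s : Finset ι) (f : ι → ℝ)
    (hf : ∀ x ∈ s, 0 ≤ f x) : (∑ x ∈ s, √(f x)) ^ 2 ≤ #s * ∑ x ∈ s, f x := by
  calc (∑ x ∈ s, √(f x)) ^ 2 ≤ #s * ∑ x ∈ s, √(f x) ^ 2 := sq_sum_le_card_mul_sum_sq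
    _ = #s * ∑ x ∈ s, f x := by
      rw [sum_congr rfl fun x hx => Real.sq_sqrt (hf x hx)]

/-- The Gini bound `G ≤ 1 - 1/K`, multiplied through by `K` so that `K = 0` needs no exclusion. -/
lemma card_mul_sum_mul_one_sub_le {ι : Type*} (s : Finset ι) (p : ι → ℝ)
    (hsum : ∑ x ∈ s, p x = 1) : #s * ∑ x ∈ s, p x * (1 - p x) ≤ #s - 1 := by
  have hcs : (∑ x ∈ s, p x) ^ 2 ≤ #s * ∑ x ∈ s, p x ^ 2 := sq_sum_le_card_mul_sum_sq
  have hgini : ∑ x ∈ s, p x * (1 - p x) = 1 - ∑ x ∈ s, p x ^ 2 := by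
    simp only [mul_one_sub, ← sq, sum_sub_distrib, hsum]
  rw [hsum] at hcs
  rw [hgini]
  linarith

lemma sq_sum_sqrt_mul_one_sub_le {ι : Type*} (s : Finset ι) (p : ι → ℝ)
    (hp0 : ∀ x ∈ s, 0 ≤ p x) (hsum : ∑ x ∈ s, p x = 1) :
    (∑ x ∈ s, √(p x * (1 - p x))) ^ 2 ≤ #{x ∈ s | 0 < p x} - 1 := by
  have hpos {x} (hx : x ∈ s) (hne : p x ≠ 0) : 0 < p x := (hp0 x hx).lt_of_ne' hne
  have hp1 {x} (hx : x ∈ s) : p x ≤ 1 := hsum ▸ single_le_sum hp0 hx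
  have hsum_supp : ∑ x ∈ s with 0 < p x, p x = 1 := by
    rw [sum_filter_of_ne fun x hx hne => hpos hx hne, hsum]
  have hsqrt_supp : ∑ x ∈ s with 0 < p x, √(p x * (1 - p x)) = ∑ x ∈ s, √(p x * (1 - p x)) :=
    sum_filter_of_ne fun x hx hne => hpos hx fun h => hne (by simp [h])
  rw [← hsqrt_supp]
  calc (∑ x ∈ s with 0 < p x, √(p x * (1 - p x))) ^ 2
      ≤ #{x ∈ s | 0 < p x} * ∑ x ∈ s with 0 < p x, p x * (1 - p x) := by
        refine sq_sum_sqrt_le_card_mul_sum _ _ fun x hx => ?_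
        have hxs := (mem_filter.1 hx).1
        exact mul_nonneg (hp0 x hxs) (sub_nonneg.2 (hp1 hxs))
    _ ≤ #{x ∈ s | 0 < p x} - 1 := card_mul_sum_mul_one_sub_le _ _ hsum_supp

theorem stmt_2_general {S : Type*} [Fintype S] (p : S → ℝ)
    (hp0 : ∀ x, 0 ≤ p x)
    (hsum : ∑ x, p x = 1)
    (K : ℕ) (hK : K = (Finset.univ.filter (fun x => 0 < p x)).card) :
    (∑ x, Real.sqrt (p x * (1 - p x)))^2 ≤ (K : ℝ) - 1 := by
  subst hK
  exact sq_sum_sqrt_mul_one_sub_le univ p (fun x _ => hp0 x) hsum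

theorem stmt_2 {S : Type*} [Fintype S] (p : S → ℝ)
    (hp0 : ∀ x, 0 ≤ p x) (hp1 : ∀ x, p x ≤ 1)
    (hsum : ∑ x, p x = 1)
    (K : ℕ) (hK : K = (Finset.univ.filter (fun x => 0 < p x)).card)
    (hK1 : 1 ≤ K) :
    (∑ x, Real.sqrt (p x * (1 - p x)))^2 ≤ (K : ℝ) - 1 :=
  stmt_2_general p hp0 hsum K hK
end

section
/- Let x, y ∈ [0,1] and ζ ≥ 0 satisfy |x − y| ≤ √(2y(1−y)ζ) + ζ/3. Then √(y(1−y)) ≤ √(x(1−x)) + 2.4√ζ. -/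
/-!
Put `a = √(y(1-y))`, `b = √(x(1-x))`, `s = √ζ`. Since `y(1-y) - x(1-x) = (y-x)(1-x-y)` and
`|1-x-y| ≤ 1` on the unit square, the hypothesis gives
`a² ≤ b² + √2·a·s + s²/3 ≤ b² + (3/2)·a·s + s²/3`. If `a` exceeded
`b + 2s`, then `a² - b² ≥ a(a - b) > 2as`, which this quadratic bound forbids.
-/

lemma mul_one_sub_sub_mul_one_sub_le_abs_sub {x y : ℝ} (hx0 : 0 ≤ x) (hx1 : x ≤ 1)
    (hy0 : 0 ≤ y) (hy1 : y ≤ 1) :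
    y * (1 - y) - x * (1 - x) ≤ |x - y| := by
  calc y * (1 - y) - x * (1 - x) = (y - x) * (1 - x - y) := by ring
    _ ≤ |y - x| * |1 - x - y| := (le_abs_self _).trans (abs_mul _ _).le
    _ ≤ |y - x| * 1 := by gcongr; exact abs_le.mpr ⟨by linarith, by linarith⟩
    _ = |x - y| := by rw [mul_one, abs_sub_comm]

lemma le_add_two_mul_of_sq_le {a b s : ℝ} (hb : 0 ≤ b) (hs : 0 ≤ s)
    (h : a ^ 2 ≤ b ^ 2 + 3 / 2 * a * s + s ^ 2 / 3) :
    a ≤ b + 2 * s := by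
  by_contra! hlt
  have hdiff : 2 * s * a + (a - b - 2 * s) * a ≤ a ^ 2 - b ^ 2 := by nlinarith
  nlinarith [mul_pos (sub_pos.2 hlt) (sub_pos.2 hlt)]

theorem stmt_3 (x y ζ : ℝ) (hx0 : 0 ≤ x) (hx1 : x ≤ 1)
    (hy0 : 0 ≤ y) (hy1 : y ≤ 1) (hζ : 0 ≤ ζ)
    (h : |x - y| ≤ Real.sqrt (2 * y * (1 - y) * ζ) + ζ / 3) :
    Real.sqrt (y * (1 - y)) ≤ Real.sqrt (x * (1 - x)) + 2.4 * Real.sqrt ζ := by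
  set a := Real.sqrt (y * (1 - y))
  set b := Real.sqrt (x * (1 - x))
  set s := Real.sqrt ζ
  have ha2 : a ^ 2 = y * (1 - y) := Real.sq_sqrt (mul_nonneg hy0 (by linarith))
  have hb2 : b ^ 2 = x * (1 - x) := Real.sq_sqrt (mul_nonneg hx0 (by linarith))
  have hs2 : s ^ 2 = ζ := Real.sq_sqrt hζ
  have hcross : Real.sqrt (2 * y * (1 - y) * ζ) ≤ 3 / 2 * a * s := by
    have hsqrt2 : Real.sqrt 2 ≤ 3 / 2 :=
      Real.sqrt_le_iff.mpr ⟨by norm_num, by norm_num⟩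
    rw [Real.sqrt_mul' _ hζ, mul_assoc 2 y, Real.sqrt_mul zero_le_two]
    gcongr
  have hquad : a ^ 2 ≤ b ^ 2 + 3 / 2 * a * s + s ^ 2 / 3 := by
    linarith [mul_one_sub_sub_mul_one_sub_le_abs_sub hx0 hx1 hy0 hy1]
  have hs0 : 0 ≤ s := Real.sqrt_nonneg ζ
  linarith [le_add_two_mul_of_sq_le (Real.sqrt_nonneg _) hs0 hquad]
end

section
/- Let p ∈ (0,1) with p ≠ 1/2 and let g(p) := (1/2 − p)/log(1/p − 1). Then for every real λ, the cumulant generating function of a centered Bernoulli(p) random variable is bounded as log(p·e^{λ(1−p)} + (1−p)·e^{−λp}) ≤ λ²·g(p)/2. -/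
/-!
Write `p = (1 - tanh a) / 2`, i.e. `a = artanh (1 - 2p) = log (1/p - 1) / 2`, so that
`g(p) = tanh a / (4a)`. The cumulant generating function becomes
`λ tanh a / 2 + log cosh (λ/2 - a) - log cosh a`, and the bound reduces to
`log cosh t - log cosh a ≤ tanh a / (2a) · (t² - a²)`: the tangent line at `a²` of the concave
function `v ↦ log cosh √v`. Its concavity says that `tanh t / t` decreases on `(0, ∞)`, which holds
because `tanh` is concave there and vanishes at `0`.
-/

open Real Set

namespace Real

theorem hasDerivAt_tanh (x : ℝ) : HasDerivAt tanh (1 / cosh x ^ 2) x := by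
  have htanh : tanh = fun x => sinh x / cosh x := funext tanh_eq_sinh_div_cosh
  rw [htanh]
  refine ((hasDerivAt_sinh x).div (hasDerivAt_cosh x) (cosh_pos x).ne').congr_deriv ?_
  rw [← cosh_sq_sub_sinh_sq x]; ring

theorem concaveOn_tanh_Ici : ConcaveOn ℝ (Ici 0) tanh := by
  have hderiv : deriv tanh = fun x => 1 / cosh x ^ 2 := funext fun x => (hasDerivAt_tanh x).deriv
  refine AntitoneOn.concaveOn_of_deriv (convex_Ici 0)
    (fun x _ => (hasDerivAt_tanh x).continuousAt.continuousWithinAt)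
    (fun x _ => (hasDerivAt_tanh x).differentiableAt.differentiableWithinAt) ?_
  rw [interior_Ici, hderiv]
  intro x hx y hy hxy
  have hcosh : cosh x ≤ cosh y := cosh_le_cosh.2 (by
    rw [abs_of_pos hx, abs_of_pos (mem_Ioi.1 hy)]; exact hxy)
  dsimp only
  gcongr

theorem antitoneOn_tanh_div_self : AntitoneOn (fun t => tanh t / t) (Ioi 0) := by
  intro s hs t ht hst
  have h := concaveOn_tanh_Ici.neg.secant_mono (a := 0) self_mem_Ici (mem_Ici.2 (le_of_lt hs))
    (mem_Ici.2 (le_of_lt ht)) (ne_of_gt hs) (ne_of_gt ht) hst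
  simp only [Pi.neg_apply, tanh_zero, neg_zero, sub_zero, neg_div] at h
  exact neg_le_neg_iff.1 h

theorem log_cosh_sub_log_cosh_le_of_pos {a : ℝ} (ha : 0 < a) (t : ℝ) :
    log (cosh t) - log (cosh a) ≤ tanh a / (2 * a) * (t ^ 2 - a ^ 2) := by
  set m := tanh a / a
  set k : ℝ → ℝ := fun t => log (cosh t) - m / 2 * t ^ 2
  have hk : ∀ t, HasDerivAt k (tanh t - m * t) t := fun t => by
    refine (((hasDerivAt_cosh t).log (cosh_pos t).ne').sub
      ((hasDerivAt_pow 2 t).const_mul (m / 2))).congr_deriv ?_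
    rw [tanh_eq_sinh_div_cosh]; ring
  have hk_deriv : deriv k = fun t => tanh t - m * t := funext fun t => (hk t).deriv
  have hk_cont : Continuous k := continuous_iff_continuousAt.2 fun t => (hk t).continuousAt
  have hk_diff : Differentiable ℝ k := fun t => (hk t).differentiableAt
  have hmono : MonotoneOn k (Icc 0 a) := by
    refine monotoneOn_of_deriv_nonneg (convex_Icc 0 a) hk_cont.continuousOn
      hk_diff.differentiableOn fun s hs => ?_
    rw [interior_Icc] at hs
    rw [hk_deriv, sub_nonneg, ← le_div_iff₀ hs.1]
    exact antitoneOn_tanh_div_self hs.1 ha hs.2.le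
  have hanti : AntitoneOn k (Ici a) := by
    refine antitoneOn_of_deriv_nonpos (convex_Ici a) hk_cont.continuousOn
      hk_diff.differentiableOn fun s hs => ?_
    rw [interior_Ici] at hs
    have hs0 : 0 < s := ha.trans hs
    rw [hk_deriv, sub_nonpos, ← div_le_iff₀ hs0]
    exact antitoneOn_tanh_div_self ha hs0 (le_of_lt hs)
  have hk_abs : k |t| ≤ k a := by
    rcases le_total |t| a with h | h
    · exact hmono ⟨abs_nonneg t, h⟩ ⟨ha.le, le_rfl⟩ h
    · exact hanti self_mem_Ici h h
  have hk_even : k |t| = k t := by simp only [k, cosh_abs, sq_abs]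
  rw [hk_even] at hk_abs
  simp only [k, m] at hk_abs
  have hrhs : tanh a / (2 * a) * (t ^ 2 - a ^ 2) =
      tanh a / a / 2 * t ^ 2 - tanh a / a / 2 * a ^ 2 := by
    ring
  linarith

theorem log_cosh_sub_log_cosh_le {a : ℝ} (ha : a ≠ 0) (t : ℝ) :
    log (cosh t) - log (cosh a) ≤ tanh a / (2 * a) * (t ^ 2 - a ^ 2) := by
  have h := log_cosh_sub_log_cosh_le_of_pos (abs_pos.2 ha) t
  rcases abs_choice a with h' | h' <;> rw [h'] at h
  · exact h
  · rwa [cosh_neg, tanh_neg, neg_sq, mul_neg, neg_div_neg_eq] at h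

end Real

theorem log_mgf_centered_bernoulli_eq {p a : ℝ} (h : tanh a = 1 - 2 * p) (l : ℝ) :
    log (p * exp (l * (1 - p)) + (1 - p) * exp (-l * p)) =
      l * tanh a / 2 + log (cosh (l / 2 - a)) - log (cosh a) := by
  have hp : p = (1 - tanh a) / 2 := by linarith
  have hsum : p * exp (l * (1 - p)) + (1 - p) * exp (-l * p) =
      exp (l * tanh a / 2) * cosh (l / 2 - a) / cosh a := by
    rw [show l * (1 - p) = l * tanh a / 2 + l / 2 by rw [hp]; ring,
      show -l * p = l * tanh a / 2 - l / 2 by rw [hp]; ring, exp_add, exp_sub, hp,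
      tanh_eq_sinh_div_cosh, cosh_eq (l / 2 - a), exp_sub, neg_sub, exp_sub, sinh_eq, cosh_eq,
      exp_neg]
    field_simp
    ring
  rw [hsum, log_div (by positivity) (cosh_pos a).ne', log_mul (exp_pos _).ne' (cosh_pos _).ne',
    log_exp]

theorem stmt_5 (p : ℝ) (hp0 : 0 < p) (hp1 : p < 1) (hp : p ≠ 1/2) (l : ℝ) :
    Real.log (p * Real.exp (l * (1 - p)) + (1 - p) * Real.exp (-l * p)) ≤
      l^2 * ((1/2 - p) / Real.log (1/p - 1)) / 2 := by
  set a := artanh (1 - 2 * p)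
  have hmem : 1 - 2 * p ∈ Ioo (-1) 1 := ⟨by linarith, by linarith⟩
  have htanh : tanh a = 1 - 2 * p := tanh_artanh hmem
  have ha : a ≠ 0 := by
    intro h0
    rw [h0, tanh_zero] at htanh
    exact hp (by linarith)
  have hlog : log (1 / p - 1) = 2 * a := by
    rw [show a = _ from artanh_eq_half_log (Ioo_subset_Icc_self hmem)]
    have : (1 + (1 - 2 * p)) / (1 - (1 - 2 * p)) = 1 / p - 1 := by field_simp; ring
    rw [this]; ring
  have hrhs : l ^ 2 * (tanh a / 2 / (2 * a)) / 2 =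
      l * tanh a / 2 + tanh a / (2 * a) * ((l / 2 - a) ^ 2 - a ^ 2) := by
    field_simp; ring
  rw [log_mgf_centered_bernoulli_eq htanh, hlog, show 1 / 2 - p = tanh a / 2 by linarith, hrhs]
  linarith [log_cosh_sub_log_cosh_le ha (l / 2 - a)]
end

section
/- Let p ∈ [1/2, 1). Then for every real λ ≥ 0, log(p·e^{λ(1−p)} + (1−p)·e^{−λp}) ≤ λ²·p(1−p)/2. -/
/-!
Write `q = 1 - p`. Factoring out `exp (-λ p)` reduces the claim to
`log (p eˣ + q) ≤ p x + p q x² / 2` at `x = λ ≥ 0`. Both sides agree to first order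
at `0`. The second derivative of the left side is the variance `σ (1 - σ)` of the exponentially
tilted Bernoulli law, whose mean `σ(x) = p eˣ / (p eˣ + q)` increases from `σ(0) = p ≥ 1/2`;
since `t (1 - t)` decreases on `[1/2, ∞)`, this variance is at most `p q`.
-/

open Real Set

lemma le_of_hasDerivAt_le_of_le {f g f' g' : ℝ → ℝ} {a b : ℝ} (hab : a ≤ b)
    (hf : ∀ x ∈ Icc a b, HasDerivAt f (f' x) x) (hg : ∀ x ∈ Icc a b, HasDerivAt g (g' x) x)
    (ha : f a ≤ g a) (hle : ∀ x ∈ Ico a b, f' x ≤ g' x) : f b ≤ g b :=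
  image_le_of_deriv_right_le_deriv_boundary
    (fun x hx => (hf x hx).continuousAt.continuousWithinAt)
    (fun x hx => (hf x (Ico_subset_Icc_self hx)).hasDerivWithinAt) ha
    (fun x hx => (hg x hx).continuousAt.continuousWithinAt)
    (fun x hx => (hg x (Ico_subset_Icc_self hx)).hasDerivWithinAt) hle ⟨hab, le_rfl⟩

noncomputable def bernoulliMGF (p x : ℝ) : ℝ := p * exp x + (1 - p)

noncomputable def tiltedBernoulliMean (p x : ℝ) : ℝ := p * exp x / bernoulliMGF p x

section

variable {p : ℝ}

lemma bernoulliMGF_pos (hp0 : 0 ≤ p) (hp1 : p ≤ 1) (x : ℝ) : 0 < bernoulliMGF p x := by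
  unfold bernoulliMGF
  rcases hp1.lt_or_eq with hp1 | rfl
  · exact add_pos_of_nonneg_of_pos (by positivity) (by linarith)
  · simpa using exp_pos x

lemma hasDerivAt_bernoulliMGF (x : ℝ) : HasDerivAt (bernoulliMGF p) (p * exp x) x :=
  ((hasDerivAt_exp x).const_mul p).add_const (1 - p)

lemma hasDerivAt_log_bernoulliMGF (hp0 : 0 ≤ p) (hp1 : p ≤ 1) (x : ℝ) :
    HasDerivAt (fun x => log (bernoulliMGF p x)) (tiltedBernoulliMean p x) x :=
  (hasDerivAt_bernoulliMGF x).log (bernoulliMGF_pos hp0 hp1 x).ne'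

lemma hasDerivAt_tiltedBernoulliMean (hp0 : 0 ≤ p) (hp1 : p ≤ 1) (x : ℝ) :
    HasDerivAt (tiltedBernoulliMean p)
      (tiltedBernoulliMean p x * (1 - tiltedBernoulliMean p x)) x := by
  have hM := (bernoulliMGF_pos hp0 hp1 x).ne'
  refine (((hasDerivAt_exp x).const_mul p).div (hasDerivAt_bernoulliMGF x) hM).congr_deriv ?_
  rw [tiltedBernoulliMean]
  field_simp

lemma le_tiltedBernoulliMean (hp0 : 0 ≤ p) (hp1 : p ≤ 1) {x : ℝ} (hx : 0 ≤ x) :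
    p ≤ tiltedBernoulliMean p x := by
  have hM := bernoulliMGF_pos hp0 hp1 x
  rw [tiltedBernoulliMean, le_div_iff₀ hM, bernoulliMGF]
  nlinarith [one_le_exp hx, mul_nonneg (sub_nonneg.2 hp1) (sub_nonneg.2 (one_le_exp hx))]

lemma tiltedBernoulliMean_le (hp0 : 1 / 2 ≤ p) (hp1 : p ≤ 1) {x : ℝ} (hx : 0 ≤ x) :
    tiltedBernoulliMean p x ≤ p + x * (p * (1 - p)) := by
  have hp : 0 ≤ p := by linarith
  refine le_of_hasDerivAt_le_of_le hx (fun y _ => hasDerivAt_tiltedBernoulliMean hp hp1 y)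
    (fun y _ => ((hasDerivAt_id y).mul_const _).const_add p) ?_ ?_
  · simp [tiltedBernoulliMean, bernoulliMGF]
  · intro y hy
    have hσ := le_tiltedBernoulliMean hp hp1 hy.1
    nlinarith

lemma log_bernoulliMGF_le (hp0 : 1 / 2 ≤ p) (hp1 : p ≤ 1) {x : ℝ} (hx : 0 ≤ x) :
    log (bernoulliMGF p x) ≤ p * x + x ^ 2 * (p * (1 - p)) / 2 := by
  have hp : 0 ≤ p := by linarith
  have hquad (y : ℝ) : HasDerivAt (fun y => p * y + y ^ 2 * (p * (1 - p)) / 2)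
      (p + y * (p * (1 - p))) y := by
    refine (((hasDerivAt_id y).const_mul p).add
      (((hasDerivAt_pow 2 y).mul_const (p * (1 - p))).div_const 2)).congr_deriv ?_
    norm_num
    ring
  refine le_of_hasDerivAt_le_of_le hx (fun y _ => hasDerivAt_log_bernoulliMGF hp hp1 y)
    (fun y _ => hquad y) ?_ ?_
  · simp [bernoulliMGF]
  · exact fun y hy => tiltedBernoulliMean_le hp0 hp1 hy.1

end

theorem stmt_6 (p : ℝ) (hp0 : 1/2 ≤ p) (hp1 : p < 1) (l : ℝ) (hl : 0 ≤ l) :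
    Real.log (p * Real.exp (l * (1 - p)) + (1 - p) * Real.exp (-l * p)) ≤
      l^2 * (p * (1 - p)) / 2 := by
  have hcenter : p * exp (l * (1 - p)) + (1 - p) * exp (-l * p)
      = exp (-(l * p)) * bernoulliMGF p l := by
    rw [bernoulliMGF, show l * (1 - p) = l + -(l * p) by ring, exp_add, neg_mul]
    ring
  rw [hcenter, log_mul (exp_ne_zero _) (bernoulliMGF_pos (by linarith) hp1.le l).ne', log_exp]
  linarith [log_bernoulliMGF_le hp0 hp1.le hl]
end

section
/- For any sequence of real numbers z_1, …, z_n with 0 ≤ z_k ≤ Z_{k−1}, where Z_k := max(1, ∑_{i=1}^{k} z_i), it holds that ∑_{k=1}^{n} z_k/Z_{k−1} ≤ 2·log(Z_n) + 1. -/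
/-! With `S_k := z_1 + ⋯ + z_k`, the potential `φ(s) = 2 log (max 1 s) + min s 1` increases by at
least `z_k / Z_{k-1}` at each step `S_{k-1} ↦ S_k`: while `S` stays below `1` the term `min s 1`
pays for the increment, and above `1` the increment `u = z_k / S_{k-1} ∈ [0, 1]` is paid for by
`2 log (1 + u) ≥ u`. Telescoping gives `∑ z_k / Z_{k-1} ≤ φ(S_n) ≤ 2 log Z_n + 1`. -/

open Finset Real

lemma half_le_log_one_add {u : ℝ} (h0 : 0 ≤ u) (h2 : u ≤ 2) : u / 2 ≤ log (1 + u) := by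
  refine le_trans ?_ (le_log_one_add_of_nonneg h0)
  rw [div_le_div_iff₀ (by norm_num) (by linarith)]
  nlinarith

noncomputable def logPotential (s : ℝ) : ℝ := 2 * log (max 1 s) + min s 1

lemma div_max_one_le_logPotential_sub {s x : ℝ} (hx : 0 ≤ x) (hxs : x ≤ max 1 s) :
    x / max 1 s ≤ logPotential (s + x) - logPotential s := by
  unfold logPotential
  rcases le_or_gt 1 s with hs | hs
  · have hs0 : 0 < s := by linarith
    rw [max_eq_right hs] at hxs ⊢
    rw [max_eq_right (by linarith), min_eq_right hs, min_eq_right (by linarith),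
      show s + x = s * (1 + x / s) by field_simp, log_mul hs0.ne' (by positivity)]
    have := half_le_log_one_add (div_nonneg hx hs0.le) (by rw [div_le_iff₀ hs0]; linarith)
    linarith
  · rw [max_eq_left hs.le] at hxs ⊢
    rw [min_eq_left hs.le, log_one, div_one]
    rcases le_or_gt (s + x) 1 with hsx | hsx
    · rw [max_eq_left hsx, min_eq_left hsx, log_one]
      linarith
    · rw [max_eq_right hsx.le, min_eq_right hsx.le]
      have := half_le_log_one_add (u := s + x - 1) (by linarith) (by linarith)
      rw [add_sub_cancel] at this
      linarith

lemma sum_div_max_one_le_logPotential (z : ℕ → ℝ) (n : ℕ)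
    (hz : ∀ k ∈ Icc 1 n, 0 ≤ z k ∧ z k ≤ max 1 (∑ i ∈ Icc 1 (k - 1), z i)) :
    ∑ k ∈ Icc 1 n, z k / max 1 (∑ i ∈ Icc 1 (k - 1), z i) ≤
      logPotential (∑ i ∈ Icc 1 n, z i) := by
  induction n with
  | zero => simp [logPotential]
  | succ n ih =>
    have hle := ih fun k hk ↦ hz k (Icc_subset_Icc_right n.le_succ hk)
    obtain ⟨hz0, hzZ⟩ := hz (n + 1) (by simp)
    rw [sum_Icc_succ_top (by omega), sum_Icc_succ_top (by omega)]
    have := div_max_one_le_logPotential_sub hz0 hzZ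
    simp only [add_tsub_cancel_right] at this ⊢
    linarith

theorem stmt_8 (n : ℕ) (z : ℕ → ℝ)
    (Z : ℕ → ℝ) (hZ : ∀ k, Z k = max 1 (∑ i ∈ Finset.Icc 1 k, z i))
    (hz : ∀ k ∈ Finset.Icc 1 n, 0 ≤ z k ∧ z k ≤ Z (k - 1)) :
    ∑ k ∈ Finset.Icc 1 n, z k / Z (k - 1) ≤ 2 * Real.log (Z n) + 1 := by
  simp only [hZ] at hz ⊢
  calc ∑ k ∈ Icc 1 n, z k / max 1 (∑ i ∈ Icc 1 (k - 1), z i)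
      ≤ logPotential (∑ i ∈ Icc 1 n, z i) := sum_div_max_one_le_logPotential z n hz
    _ ≤ 2 * log (max 1 (∑ i ∈ Icc 1 n, z i)) + 1 := by
      unfold logPotential
      linarith [min_le_right (∑ i ∈ Icc 1 n, z i) 1]
end

section
/- Let (X_t)_{t≥1} be a martingale difference sequence with a ≤ X_t ≤ b almost surely for real constants a < b. Then for all δ ∈ (0,1), P(∃ T ∈ ℕ : ∑_{t=1}^{T} X_t ≥ (b−a)·√((T+1)/2 · log(√(T+1)/δ))) ≤ δ. -/
/-
With `σ = (b - a) / 2` and `S_n = X_1 + ⋯ + X_n`, Hoeffding's lemma applied conditionally on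
`𝒢 (n - 1)` makes `exp (λ S_n - σ² n λ² / 2)` a supermartingale for every `λ`. Mixing over `λ`
with the `N(0, σ⁻²)` density keeps the supermartingale property (Tonelli) and gives the closed
form `N_n = exp (S_n² / (2 σ² (n + 1))) / √(n + 1)`, with `N_0 = 1`. Ville's inequality bounds
the probability that `N` ever reaches `1/δ` by `δ`, and crossing the boundary at time `T`
forces `N_T ≥ 1/δ`.
-/

open MeasureTheory ProbabilityTheory Real

lemma exp_mul_le_chord {a b x : ℝ} (hab : a < b) (hx : x ∈ Set.Icc a b) (t : ℝ) :
    exp (t * x) ≤ (b * exp (t * a) - a * exp (t * b)) / (b - a) +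
      (exp (t * b) - exp (t * a)) / (b - a) * x := by
  have hba : 0 < b - a := sub_pos.2 hab
  have h := convexOn_exp.2 (Set.mem_univ (t * a)) (Set.mem_univ (t * b))
    (div_nonneg (sub_nonneg.2 hx.2) hba.le) (div_nonneg (sub_nonneg.2 hx.1) hba.le)
    (by field_simp; ring)
  simp only [smul_eq_mul] at h
  calc exp (t * x) = exp ((b - x) / (b - a) * (t * a) + (x - a) / (b - a) * (t * b)) := by
        congr 1; field_simp; ring
    _ ≤ _ := h
    _ = _ := by field_simp; ring

/-- The left side is the moment generating function of the centred law on `{a, b}`, so this is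
Hoeffding's lemma for that law. -/
lemma two_point_mgf_le {a b : ℝ} (ha : a ≤ 0) (hb : 0 ≤ b) (hab : a < b) (t : ℝ) :
    (b * exp (t * a) - a * exp (t * b)) / (b - a) ≤ exp (((b - a) / 2) ^ 2 * t ^ 2 / 2) := by
  have hba : 0 < b - a := sub_pos.2 hab
  have hp : 0 ≤ -a / (b - a) := div_nonneg (by linarith) hba.le
  have hq : 0 ≤ b / (b - a) := div_nonneg hb hba.le
  set μ : Measure ℝ := ENNReal.ofReal (b / (b - a)) • Measure.dirac a +
    ENNReal.ofReal (-a / (b - a)) • Measure.dirac b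
  have : IsProbabilityMeasure μ := ⟨by
    simp only [μ, Measure.add_apply, Measure.smul_apply, measure_univ, smul_eq_mul, mul_one]
    rw [← ENNReal.ofReal_add hq hp, ← add_div, ← sub_eq_add_neg, div_self hba.ne',
      ENNReal.ofReal_one]⟩
  have hμ_integral (f : ℝ → ℝ) : ∫ x, f x ∂μ = b / (b - a) * f a + -a / (b - a) * f b := by
    rw [integral_add_measure ((integrable_dirac (by simp)).smul_measure (by simp))
      ((integrable_dirac (by simp)).smul_measure (by simp)), integral_smul_measure,
      integral_smul_measure, integral_dirac, integral_dirac, ENNReal.toReal_ofReal hq,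
      ENNReal.toReal_ofReal hp, smul_eq_mul, smul_eq_mul]
  have hIcc : ∀ᵐ x ∂μ, x ∈ Set.Icc a b := by
    rw [ae_add_measure_iff]
    constructor <;> refine Measure.ae_smul_measure ((ae_dirac_iff measurableSet_Icc).2 ?_) _ <;>
      simp [hab.le]
  have hmean : ∫ x, x ∂μ = 0 := by rw [hμ_integral]; field_simp; ring
  have := (hasSubgaussianMGF_of_mem_Icc_of_integral_eq_zero aemeasurable_id hIcc hmean).mgf_le t
  rw [mgf, hμ_integral] at this
  convert this using 2
  · simp only [id]; ring
  · simp [abs_of_pos hba]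

section Conditional

variable {Ω : Type*} {m m0 : MeasurableSpace Ω} {μ : Measure Ω}

lemma integral_mul_eq_zero_of_condExp_eq_zero [IsFiniteMeasure μ] (hm : m ≤ m0) {W X : Ω → ℝ}
    (hW : StronglyMeasurable[m] W) (hWX : Integrable (fun ω => W ω * X ω) μ)
    (hX : Integrable X μ) (hX0 : μ[X|m] =ᵐ[μ] 0) : ∫ ω, W ω * X ω ∂μ = 0 := by
  calc ∫ ω, W ω * X ω ∂μ = ∫ ω, μ[W * X|m] ω ∂μ := (integral_condExp hm).symm
    _ = ∫ ω, W ω * μ[X|m] ω ∂μ :=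
        integral_congr_ae (condExp_mul_of_stronglyMeasurable_left hW hWX hX)
    _ = 0 := by
      rw [integral_congr_ae (hX0.mono fun ω hω => by rw [hω, Pi.zero_apply, mul_zero])]
      simp

theorem integral_mul_exp_le_of_condExp_eq_zero [IsProbabilityMeasure μ] (hm : m ≤ m0)
    {W X : Ω → ℝ} {a b : ℝ} (hab : a < b) (hW : StronglyMeasurable[m] W) (hW0 : 0 ≤ W)
    (hWint : Integrable W μ) (hX : AEStronglyMeasurable X μ)
    (hXab : ∀ᵐ ω ∂μ, X ω ∈ Set.Icc a b) (hX0 : μ[X|m] =ᵐ[μ] 0) (t : ℝ) :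
    ∫ ω, W ω * exp (t * X ω) ∂μ ≤ exp (((b - a) / 2) ^ 2 * t ^ 2 / 2) * ∫ ω, W ω ∂μ := by
  have hXint : Integrable X μ := .of_mem_Icc a b hX.aemeasurable hXab
  have hWX : Integrable (fun ω => W ω * X ω) μ := hWint.mul_bdd hX (c := max |a| |b|)
    (hXab.mono fun ω hω => abs_le_max_abs_abs hω.1 hω.2)
  have hmean : ∫ ω, X ω ∂μ = 0 := by
    rw [← integral_condExp hm, integral_congr_ae hX0]; simp
  have ha : a ≤ 0 := by
    simpa [hmean] using integral_mono_ae (integrable_const a) hXint (hXab.mono fun _ h => h.1)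
  have hb : 0 ≤ b := by
    simpa [hmean] using integral_mono_ae hXint (integrable_const b) (hXab.mono fun _ h => h.2)
  set c₀ := (b * exp (t * a) - a * exp (t * b)) / (b - a)
  set c₁ := (exp (t * b) - exp (t * a)) / (b - a)
  calc ∫ ω, W ω * exp (t * X ω) ∂μ ≤ ∫ ω, (c₀ * W ω + c₁ * (W ω * X ω)) ∂μ := by
        refine integral_mono_of_nonneg (.of_forall fun ω => mul_nonneg (hW0 ω) (exp_pos _).le)
          ((hWint.const_mul c₀).add (hWX.const_mul c₁)) (hXab.mono fun ω hω => ?_)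
        have := mul_le_mul_of_nonneg_left (exp_mul_le_chord hab hω t) (hW0 ω)
        linarith
    _ = c₀ * ∫ ω, W ω ∂μ := by
        rw [integral_add (hWint.const_mul c₀) (hWX.const_mul c₁), integral_const_mul,
          integral_const_mul, integral_mul_eq_zero_of_condExp_eq_zero hm hW hWX hXint hX0,
          mul_zero, add_zero]
    _ ≤ exp (((b - a) / 2) ^ 2 * t ^ 2 / 2) * ∫ ω, W ω ∂μ :=
        mul_le_mul_of_nonneg_right (two_point_mgf_le ha hb hab t) (integral_nonneg hW0)

end Conditional

/-- **Ville's inequality** for a nonnegative supermartingale. -/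
theorem mul_measure_exists_le_le_lintegral {Ω : Type*} {m0 : MeasurableSpace Ω}
    {μ : Measure Ω} {𝒢 : Filtration ℕ m0} {N : ℕ → Ω → ENNReal} (hN : Adapted 𝒢 N)
    (hsuper : ∀ n s, MeasurableSet[𝒢 n] s → ∫⁻ ω in s, N (n + 1) ω ∂μ ≤ ∫⁻ ω in s, N n ω ∂μ)
    (ε : ENNReal) : ε * μ {ω | ∃ n, ε ≤ N n ω} ≤ ∫⁻ ω, N 0 ω ∂μ := by
  set C : ℕ → Set Ω := fun n => {ω | ∀ k < n, N k ω < ε}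
  have hC (n : ℕ) : MeasurableSet[𝒢 n] (C (n + 1)) := by
    simp only [C, Set.ofPred_forall]
    exact .iInter fun k => .iInter fun hk =>
      measurableSet_lt ((hN k).mono (𝒢.mono (by omega)) le_rfl) measurable_const
  have hCsucc (n : ℕ) : C (n + 1) = C n \ {ω | ε ≤ N n ω} := by
    ext ω
    simp only [C, Set.mem_ofPred_eq, Set.mem_sdiff, not_le, Nat.lt_succ_iff_lt_or_eq]
    grind
  have hstep (n : ℕ) : ε * μ (C (n + 1))ᶜ + ∫⁻ ω in C (n + 1), N (n + 1) ω ∂μ ≤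
      ε * μ (C n)ᶜ + ∫⁻ ω in C n, N n ω ∂μ := by
    set D := {ω | ε ≤ N n ω}
    have hNn : Measurable (N n) := (hN n).mono (𝒢.le n) le_rfl
    have hcompl : (C (n + 1))ᶜ ⊆ (C n)ᶜ ∪ (C n ∩ D) := by
      rw [hCsucc]; intro ω; simp only [Set.mem_compl_iff, Set.mem_sdiff, Set.mem_union,
        Set.mem_inter_iff]; tauto
    calc ε * μ (C (n + 1))ᶜ + ∫⁻ ω in C (n + 1), N (n + 1) ω ∂μ
        ≤ ε * (μ (C n)ᶜ + μ (C n ∩ D)) + ∫⁻ ω in C n \ D, N n ω ∂μ := by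
          rw [← hCsucc]
          exact add_le_add
            (mul_le_mul_right ((measure_mono hcompl).trans (measure_union_le _ _)) ε)
            (hsuper n _ (hC n))
      _ = ε * μ (C n)ᶜ + (∫⁻ _ in C n ∩ D, ε ∂μ + ∫⁻ ω in C n \ D, N n ω ∂μ) := by
          rw [setLIntegral_const, mul_add, add_assoc]
      _ ≤ ε * μ (C n)ᶜ + (∫⁻ ω in C n ∩ D, N n ω ∂μ + ∫⁻ ω in C n \ D, N n ω ∂μ) :=
          add_le_add le_rfl (add_le_add (setLIntegral_mono hNn fun ω hω => hω.2) le_rfl)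
      _ = ε * μ (C n)ᶜ + ∫⁻ ω in C n, N n ω ∂μ := by
          rw [lintegral_inter_add_sdiff _ _ (measurableSet_le measurable_const hNn)]
  have hbound (n : ℕ) : ε * μ (C n)ᶜ ≤ ∫⁻ ω, N 0 ω ∂μ := by
    have hanti := antitone_nat_of_succ_le (f := fun n =>
      ε * μ (C n)ᶜ + ∫⁻ ω in C n, N n ω ∂μ) hstep (Nat.zero_le n)
    simp only [C, not_lt_zero, false_imp_iff, imp_true_iff, Set.ofPred_true, Set.compl_univ,
      measure_empty, mul_zero, zero_add, Measure.restrict_univ] at hanti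
    exact le_self_add.trans hanti
  have hunion : {ω | ∃ n, ε ≤ N n ω} = ⋃ n, (C n)ᶜ := by
    ext ω
    simp only [C, Set.mem_ofPred_eq, Set.mem_iUnion, Set.mem_compl_iff, not_forall, not_lt]
    exact ⟨fun ⟨n, hn⟩ => ⟨n + 1, n, n.lt_succ_self, hn⟩, fun ⟨_, n, _, hn⟩ => ⟨n, hn⟩⟩
  have hmono : Monotone fun n => (C n)ᶜ := fun m n hmn =>
    Set.compl_subset_compl.2 fun ω hω k hk => hω k (lt_of_lt_of_le hk hmn)
  rw [hunion, hmono.measure_iUnion, ENNReal.mul_iSup]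
  exact iSup_le hbound

lemma lintegral_lintegral_le_of_forall {α β : Type*} [MeasurableSpace α] [MeasurableSpace β]
    {μ : Measure α} {ν : Measure β} [SFinite μ] [SFinite ν] {f g : α → β → ENNReal}
    (hf : AEMeasurable (Function.uncurry f) (μ.prod ν))
    (hg : AEMeasurable (Function.uncurry g) (μ.prod ν))
    (hfg : ∀ y, ∫⁻ x, f x y ∂μ ≤ ∫⁻ x, g x y ∂μ) :
    ∫⁻ x, ∫⁻ y, f x y ∂ν ∂μ ≤ ∫⁻ x, ∫⁻ y, g x y ∂ν ∂μ := by
  rw [lintegral_lintegral_swap hf, lintegral_lintegral_swap hg]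
  exact lintegral_mono hfg

lemma lintegral_exp_mul_sub_mul_sq {k : ℝ} (hk : 0 < k) (s : ℝ) :
    ∫⁻ x : ℝ, ENNReal.ofReal (exp (s * x - k / 2 * x ^ 2)) =
      ENNReal.ofReal (sqrt (2 * π / k) * exp (s ^ 2 / (2 * k))) := by
  have hsq (x : ℝ) : exp (s * x - k / 2 * x ^ 2) =
      exp (s ^ 2 / (2 * k)) * exp (-(k / 2) * (x - s / k) ^ 2) := by
    rw [← exp_add]; congr 1; field_simp; ring
  simp_rw [hsq, ENNReal.ofReal_mul (exp_pos _).le]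
  rw [lintegral_const_mul _ (by fun_prop),
    lintegral_sub_right_eq_self (fun x => ENNReal.ofReal (exp (-(k / 2) * x ^ 2))) (s / k),
    ← ofReal_integral_eq_lintegral_ofReal (integrable_exp_neg_mul_sq (by positivity))
      (.of_forall fun x => (exp_pos _).le), integral_gaussian, mul_comm,
    show π / (k / 2) = 2 * π / k by ring, ENNReal.ofReal_mul (sqrt_nonneg _)]

def partialSum {Ω : Type*} (X : ℕ → Ω → ℝ) (n : ℕ) (ω : Ω) : ℝ := ∑ t ∈ Finset.Icc 1 n, X t ω

/-- The mixture `∫ exp (λ S_n - c n λ² / 2) dN(0, c⁻¹)(λ)` in closed form. -/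
noncomputable def normalMixture {Ω : Type*} (c : ℝ) (X : ℕ → Ω → ℝ) (n : ℕ) (ω : Ω) :
    ENNReal :=
  ENNReal.ofReal (exp (partialSum X n ω ^ 2 / (2 * (c * (n + 1)))) / sqrt (n + 1))

section MartingaleDifference

variable {Ω : Type*} {m0 : MeasurableSpace Ω} {P : Measure Ω} {𝒢 : Filtration ℕ m0}
  {X : ℕ → Ω → ℝ} {a b : ℝ}

lemma partialSum_succ (n : ℕ) (ω : Ω) :
    partialSum X (n + 1) ω = partialSum X n ω + X (n + 1) ω :=
  Finset.sum_Icc_succ_top (by omega) _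

lemma adapted_partialSum (hX : Adapted 𝒢 X) : Adapted 𝒢 (partialSum X) := fun _ =>
  Finset.measurable_fun_sum _ fun t ht => (hX t).mono (𝒢.mono (Finset.mem_Icc.1 ht).2) le_rfl

lemma ae_partialSum_mem_Icc (hbdd : ∀ t, ∀ᵐ ω ∂P, a ≤ X t ω ∧ X t ω ≤ b) (n : ℕ) :
    ∀ᵐ ω ∂P, partialSum X n ω ∈ Set.Icc (n * a) (n * b) := by
  filter_upwards [ae_all_iff.2 hbdd] with ω hω
  have hcard : ((Finset.Icc 1 n).card : ℝ) = n := by simp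
  constructor
  · simpa [partialSum, hcard] using
      Finset.card_nsmul_le_sum (Finset.Icc 1 n) _ a fun t _ => (hω t).1
  · simpa [partialSum, hcard] using
      Finset.sum_le_card_nsmul (Finset.Icc 1 n) _ b fun t _ => (hω t).2

lemma normalMixture_eq_lintegral {c : ℝ} (hc : 0 < c) (n : ℕ) (ω : Ω) :
    normalMixture c X n ω = ∫⁻ θ : ℝ, ENNReal.ofReal
      (sqrt (c / (2 * π)) * exp (partialSum X n ω * θ - c * (n + 1) / 2 * θ ^ 2)) := by
  simp_rw [ENNReal.ofReal_mul (sqrt_nonneg _)]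
  rw [lintegral_const_mul' _ _ ENNReal.ofReal_ne_top,
    lintegral_exp_mul_sub_mul_sq (by positivity), ← ENNReal.ofReal_mul (sqrt_nonneg _)]
  have hconst : sqrt (c / (2 * π)) * sqrt (2 * π / (c * (n + 1))) = (sqrt (n + 1))⁻¹ := by
    rw [← sqrt_mul (by positivity), ← sqrt_inv]
    congr 1
    field_simp
  rw [normalMixture, div_eq_inv_mul, ← hconst, mul_assoc]

lemma adapted_normalMixture (c : ℝ) (hX : Adapted 𝒢 X) : Adapted 𝒢 (normalMixture c X) :=
  fun n => ENNReal.measurable_ofReal.comp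
    ((by fun_prop : Continuous fun s : ℝ => exp (s ^ 2 / (2 * (c * (n + 1)))) / sqrt (n + 1))
      |>.measurable.comp (adapted_partialSum hX n))

lemma integrable_exp_mul_partialSum [IsFiniteMeasure P] (hX : Adapted 𝒢 X)
    (hbdd : ∀ t, ∀ᵐ ω ∂P, a ≤ X t ω ∧ X t ω ≤ b) (t : ℝ) (n : ℕ) :
    Integrable (fun ω => exp (t * partialSum X n ω)) P :=
  integrable_exp_mul_of_mem_Icc ((adapted_partialSum hX n).mono (𝒢.le n) le_rfl).aemeasurable
    (ae_partialSum_mem_Icc hbdd n)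

variable [IsProbabilityMeasure P]

lemma setIntegral_exp_mul_partialSum_succ_le (hab : a < b) (hX : Adapted 𝒢 X)
    (hmds : ∀ t, 1 ≤ t → P[X t|𝒢 (t - 1)] =ᵐ[P] 0)
    (hbdd : ∀ t, ∀ᵐ ω ∂P, a ≤ X t ω ∧ X t ω ≤ b) (t : ℝ) {n : ℕ} {A : Set Ω}
    (hA : MeasurableSet[𝒢 n] A) :
    ∫ ω in A, exp (t * partialSum X (n + 1) ω) ∂P ≤
      exp (((b - a) / 2) ^ 2 * t ^ 2 / 2) * ∫ ω in A, exp (t * partialSum X n ω) ∂P := by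
  set W := A.indicator fun ω => exp (t * partialSum X n ω)
  have hW : StronglyMeasurable[𝒢 n] W :=
    ((continuous_exp.comp (continuous_const_mul t)).comp_stronglyMeasurable
      (adapted_partialSum hX n).stronglyMeasurable).indicator hA
  have hsplit : ∫ ω in A, exp (t * partialSum X (n + 1) ω) ∂P =
      ∫ ω, W ω * exp (t * X (n + 1) ω) ∂P := by
    rw [← integral_indicator (𝒢.le n _ hA)]
    congr 1 with ω
    by_cases hω : ω ∈ A <;> simp [W, hω, partialSum_succ, mul_add, exp_add]
  rw [hsplit, ← integral_indicator (𝒢.le n _ hA)]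
  exact integral_mul_exp_le_of_condExp_eq_zero (𝒢.le n) hab hW
    (Set.indicator_nonneg fun _ _ => (exp_pos _).le)
    ((integrable_exp_mul_partialSum hX hbdd t n).indicator (𝒢.le n _ hA))
    ((hX (n + 1)).mono (𝒢.le _) le_rfl).aestronglyMeasurable (hbdd (n + 1))
    (by simpa using hmds (n + 1) (by omega)) t

lemma setLIntegral_normalMixture_succ_le (hab : a < b) (hX : Adapted 𝒢 X)
    (hmds : ∀ t, 1 ≤ t → P[X t|𝒢 (t - 1)] =ᵐ[P] 0)
    (hbdd : ∀ t, ∀ᵐ ω ∂P, a ≤ X t ω ∧ X t ω ≤ b) {n : ℕ} {A : Set Ω}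
    (hA : MeasurableSet[𝒢 n] A) :
    ∫⁻ ω in A, normalMixture (((b - a) / 2) ^ 2) X (n + 1) ω ∂P ≤
      ∫⁻ ω in A, normalMixture (((b - a) / 2) ^ 2) X n ω ∂P := by
  set c := ((b - a) / 2) ^ 2
  have hc : 0 < c := pow_pos (half_pos (sub_pos.2 hab)) 2
  have hS (m : ℕ) : Measurable (partialSum X m) :=
    (adapted_partialSum hX m).mono (𝒢.le m) le_rfl
  have hmix (m : ℕ) (θ : ℝ) : ∫⁻ ω in A, ENNReal.ofReal
      (sqrt (c / (2 * π)) * exp (partialSum X m ω * θ - c * (m + 1) / 2 * θ ^ 2)) ∂P =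
      ENNReal.ofReal (sqrt (c / (2 * π)) * exp (-(c * (m + 1) / 2 * θ ^ 2)) *
        ∫ ω in A, exp (θ * partialSum X m ω) ∂P) := by
    rw [← integral_const_mul, ofReal_integral_eq_lintegral_ofReal
      ((integrable_exp_mul_partialSum hX hbdd θ m).restrict.const_mul _)
      (.of_forall fun ω => by positivity)]
    congr 1 with ω
    rw [mul_assoc, ← exp_add]
    ring_nf
  simp_rw [normalMixture_eq_lintegral hc]
  refine lintegral_lintegral_le_of_forall (by fun_prop) (by fun_prop) fun θ => ?_
  rw [hmix, hmix]
  refine ENNReal.ofReal_le_ofReal ?_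
  calc sqrt (c / (2 * π)) * exp (-(c * ((n + 1 : ℕ) + 1) / 2 * θ ^ 2)) *
        ∫ ω in A, exp (θ * partialSum X (n + 1) ω) ∂P
      ≤ sqrt (c / (2 * π)) * exp (-(c * ((n + 1 : ℕ) + 1) / 2 * θ ^ 2)) *
        (exp (c * θ ^ 2 / 2) * ∫ ω in A, exp (θ * partialSum X n ω) ∂P) := by
        gcongr
        exact setIntegral_exp_mul_partialSum_succ_le hab hX hmds hbdd θ hA
    _ = _ := by
        rw [← mul_assoc, mul_assoc (sqrt _), ← exp_add]
        push_cast
        ring_nf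

end MartingaleDifference

lemma inv_le_exp_sq_div_sqrt {w δ s T : ℝ} (hw : 0 < w) (hT : 0 ≤ T) (hδ0 : 0 < δ)
    (hδ1 : δ < 1) (hs : w * sqrt ((T + 1) / 2 * log (sqrt (T + 1) / δ)) ≤ s) :
    δ⁻¹ ≤ exp (s ^ 2 / (2 * ((w / 2) ^ 2 * (T + 1)))) / sqrt (T + 1) := by
  have hsqrt : 0 < sqrt (T + 1) := sqrt_pos.2 (by linarith)
  have hlog : 0 ≤ log (sqrt (T + 1) / δ) := by
    refine log_nonneg ((one_le_div hδ0).2 ?_)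
    rw [show (δ : ℝ) = sqrt (δ ^ 2) by rw [sqrt_sq hδ0.le]]
    exact sqrt_le_sqrt (by nlinarith)
  have hsq : w ^ 2 * ((T + 1) / 2 * log (sqrt (T + 1) / δ)) ≤ s ^ 2 := by
    have h0 : 0 ≤ w * sqrt ((T + 1) / 2 * log (sqrt (T + 1) / δ)) := by positivity
    calc w ^ 2 * ((T + 1) / 2 * log (sqrt (T + 1) / δ))
        = (w * sqrt ((T + 1) / 2 * log (sqrt (T + 1) / δ))) ^ 2 := by
          rw [mul_pow, sq_sqrt (by positivity)]
      _ ≤ s ^ 2 := pow_le_pow_left₀ h0 hs 2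
  have hexp : sqrt (T + 1) / δ ≤ exp (s ^ 2 / (2 * ((w / 2) ^ 2 * (T + 1)))) := by
    rw [← exp_log (div_pos hsqrt hδ0), exp_le_exp, le_div_iff₀ (by positivity)]
    linarith
  rw [le_div_iff₀ hsqrt]
  calc δ⁻¹ * sqrt (T + 1) = sqrt (T + 1) / δ := by ring
    _ ≤ _ := hexp

theorem stmt_14_general {Ω : Type*} {m0 : MeasurableSpace Ω} (P : Measure Ω) [IsProbabilityMeasure P]
    (𝒢 : Filtration ℕ m0) (X : ℕ → Ω → ℝ) (a b : ℝ) (hab : a < b)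
    (hadapted : Adapted 𝒢 X)
    (hmds : ∀ t : ℕ, 1 ≤ t → P[X t | 𝒢 (t - 1)] =ᵐ[P] 0)
    (hbdd : ∀ t : ℕ, ∀ᵐ ω ∂P, a ≤ X t ω ∧ X t ω ≤ b)
    (δ : ℝ) (hδ0 : 0 < δ) (hδ1 : δ < 1) :
    P {ω | ∃ T : ℕ, 1 ≤ T ∧
        ∑ t ∈ Finset.Icc 1 T, X t ω ≥
          (b - a) * Real.sqrt ((T + 1) / 2 * Real.log (Real.sqrt (T + 1) / δ))} ≤
      ENNReal.ofReal δ := by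
  set N := normalMixture (((b - a) / 2) ^ 2) X
  have hville := mul_measure_exists_le_le_lintegral (adapted_normalMixture _ hadapted)
    (fun n A hA => setLIntegral_normalMixture_succ_le hab hadapted hmds hbdd hA)
    (ENNReal.ofReal δ)⁻¹
  have hN0 : ∫⁻ ω, N 0 ω ∂P = 1 := by simp [N, normalMixture, partialSum]
  have hcross : {ω | ∃ T : ℕ, 1 ≤ T ∧ ∑ t ∈ Finset.Icc 1 T, X t ω ≥
      (b - a) * Real.sqrt ((T + 1) / 2 * Real.log (Real.sqrt (T + 1) / δ))} ⊆
      {ω | ∃ n, (ENNReal.ofReal δ)⁻¹ ≤ N n ω} := by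
    rintro ω ⟨T, -, hT⟩
    refine ⟨T, ?_⟩
    rw [← ENNReal.ofReal_inv_of_pos hδ0]
    exact ENNReal.ofReal_le_ofReal
      (inv_le_exp_sq_div_sqrt (sub_pos.2 hab) T.cast_nonneg hδ0 hδ1 hT)
  rw [hN0] at hville
  exact (measure_mono hcross).trans <| by
    simpa using (ENNReal.inv_mul_le_iff (by simpa using hδ0) ENNReal.ofReal_ne_top).1 hville

theorem stmt_14 {Ω : Type*} {m0 : MeasurableSpace Ω} (P : Measure Ω) [IsProbabilityMeasure P]
    (𝒢 : Filtration ℕ m0) (X : ℕ → Ω → ℝ) (a b : ℝ) (hab : a < b)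
    (hadapted : Adapted 𝒢 X)
    (hint : ∀ t, Integrable (X t) P)
    (hmds : ∀ t : ℕ, 1 ≤ t → P[X t | 𝒢 (t - 1)] =ᵐ[P] 0)
    (hbdd : ∀ t : ℕ, ∀ᵐ ω ∂P, a ≤ X t ω ∧ X t ω ≤ b)
    (δ : ℝ) (hδ0 : 0 < δ) (hδ1 : δ < 1) :
    P {ω | ∃ T : ℕ, 1 ≤ T ∧
        ∑ t ∈ Finset.Icc 1 T, X t ω ≥
          (b - a) * Real.sqrt ((T + 1) / 2 * Real.log (Real.sqrt (T + 1) / δ))} ≤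
      ENNReal.ofReal δ :=
  stmt_14_general P 𝒢 X a b hab hadapted hmds hbdd δ hδ0 hδ1
end

section
/- Let (ν_k(s))_{k=1}^{m}, for s ranging over a finite set Σ, be nonnegative reals, let N_k(s) := max(1, ∑_{j<k} ν_j(s)), and assume ν_k(s) ≤ N_k(s) for all k, s. Then ∑_{s∈Σ} ∑_{k=1}^{m} ν_k(s)/√(N_k(s)) ≤ (√2 + 1)·√(|Σ| · T), where T := ∑_{s∈Σ} ∑_{k=1}^{m} ν_k(s). -/
/-!
Write `S_k = ∑_{j ≤ k} ν_j`. Since `ν_k ≤ max(1, S_{k-1})`, we get `S_k ≤ 2 max(1, S_{k-1})`, hence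
`√S_k + √S_{k-1} ≤ (√2 + 1) √(max(1, S_{k-1}))`; multiplying by `√S_k - √S_{k-1}` gives
`ν_k / √(max(1, S_{k-1})) ≤ (√2 + 1) (√S_k - √S_{k-1})`, which telescopes to `(√2 + 1) √S_m` for
each `s`. Summing over `s` and applying Cauchy–Schwarz, `∑_s √S_m(s) ≤ √(|Σ| T)`.
-/

open Finset

lemma div_sqrt_max_one_le_sqrt_add_sub_sqrt {a v : ℝ} (ha : 0 ≤ a) (hv : 0 ≤ v)
    (hva : v ≤ max 1 a) :
    v / √(max 1 a) ≤ (√2 + 1) * (√(a + v) - √a) := by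
  have hpos : 0 < √(max 1 a) := Real.sqrt_pos.mpr (lt_max_of_lt_left one_pos)
  have hsum : √(a + v) + √a ≤ (√2 + 1) * √(max 1 a) := by
    have h₁ : √(a + v) ≤ √2 * √(max 1 a) := by
      rw [← Real.sqrt_mul zero_le_two]
      exact Real.sqrt_le_sqrt (by linarith [le_max_right 1 a])
    have h₂ : √a ≤ √(max 1 a) := Real.sqrt_le_sqrt (le_max_right 1 a)
    linarith
  have hdiff : 0 ≤ √(a + v) - √a := sub_nonneg.mpr (Real.sqrt_le_sqrt (by linarith))
  have hv_eq : v = (√(a + v) - √a) * (√(a + v) + √a) := by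
    rw [mul_comm, ← sq_sub_sq, Real.sq_sqrt (by linarith), Real.sq_sqrt ha]
    ring
  rw [div_le_iff₀ hpos]
  calc v = (√(a + v) - √a) * (√(a + v) + √a) := hv_eq
    _ ≤ (√(a + v) - √a) * ((√2 + 1) * √(max 1 a)) := mul_le_mul_of_nonneg_left hsum hdiff
    _ = _ := by ring

lemma sum_div_sqrt_max_one_partialSum_le (z : ℕ → ℝ) (n : ℕ)
    (hz₀ : ∀ k ∈ Icc 1 n, 0 ≤ z k)
    (hz : ∀ k ∈ Icc 1 n, z k ≤ max 1 (∑ j ∈ Icc 1 (k - 1), z j)) :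
    ∑ k ∈ Icc 1 n, z k / √(max 1 (∑ j ∈ Icc 1 (k - 1), z j)) ≤
      (√2 + 1) * √(∑ k ∈ Icc 1 n, z k) := by
  induction n with
  | zero => simp
  | succ n ih =>
    have hmem : n + 1 ∈ Icc 1 (n + 1) := mem_Icc.mpr ⟨le_add_self, le_rfl⟩
    have hIcc : Icc 1 n ⊆ Icc 1 (n + 1) := Icc_subset_Icc_right n.le_succ
    have hS : 0 ≤ ∑ k ∈ Icc 1 n, z k := sum_nonneg fun k hk ↦ hz₀ k (hIcc hk)
    have hstep := div_sqrt_max_one_le_sqrt_add_sub_sqrt hS (hz₀ _ hmem)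
      (by simpa using hz _ hmem)
    rw [sum_Icc_succ_top le_add_self, sum_Icc_succ_top le_add_self, Nat.add_sub_cancel]
    have := ih (fun k hk ↦ hz₀ k (hIcc hk)) (fun k hk ↦ hz k (hIcc hk))
    linarith

lemma Real.sum_sqrt_le_sqrt_card_mul_sum {ι : Type*} (s : Finset ι) {f : ι → ℝ}
    (hf : ∀ i ∈ s, 0 ≤ f i) :
    ∑ i ∈ s, √(f i) ≤ √(#s * ∑ i ∈ s, f i) := by
  apply Real.le_sqrt_of_sq_le
  calc (∑ i ∈ s, √(f i)) ^ 2 ≤ #s * ∑ i ∈ s, √(f i) ^ 2 := sq_sum_le_card_mul_sum_sq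
    _ = #s * ∑ i ∈ s, f i := by
      rw [sum_congr rfl fun i hi ↦ Real.sq_sqrt (hf i hi)]

theorem stmt_18 {St : Type*} [Fintype St] (m : ℕ) (ν : ℕ → St → ℝ)
    (N : ℕ → St → ℝ)
    (hN : ∀ k s, N k s = max 1 (∑ j ∈ Finset.Icc 1 (k - 1), ν j s))
    (hν0 : ∀ k ∈ Finset.Icc 1 m, ∀ s, 0 ≤ ν k s)
    (hνN : ∀ k ∈ Finset.Icc 1 m, ∀ s, ν k s ≤ N k s)
    (T : ℝ) (hT : T = ∑ s, ∑ k ∈ Finset.Icc 1 m, ν k s) :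
    ∑ s, ∑ k ∈ Finset.Icc 1 m, ν k s / Real.sqrt (N k s) ≤
      (Real.sqrt 2 + 1) * Real.sqrt ((Fintype.card St : ℝ) * T) := by
  have hper (s : St) : ∑ k ∈ Icc 1 m, ν k s / √(N k s) ≤ (√2 + 1) * √(∑ k ∈ Icc 1 m, ν k s) := by
    simp only [hN] at hνN ⊢
    exact sum_div_sqrt_max_one_partialSum_le (ν · s) m (fun k hk ↦ hν0 k hk s)
      (fun k hk ↦ hνN k hk s)
  have hcs : ∑ s, √(∑ k ∈ Icc 1 m, ν k s) ≤ √(Fintype.card St * T) := by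
    rw [hT, ← card_univ]
    exact Real.sum_sqrt_le_sqrt_card_mul_sum _ fun s _ ↦ sum_nonneg fun k hk ↦ hν0 k hk s
  calc ∑ s, ∑ k ∈ Icc 1 m, ν k s / √(N k s)
      ≤ ∑ s, (√2 + 1) * √(∑ k ∈ Icc 1 m, ν k s) := sum_le_sum fun s _ ↦ hper s
    _ = (√2 + 1) * ∑ s, √(∑ k ∈ Icc 1 m, ν k s) := (mul_sum ..).symm
    _ ≤ (√2 + 1) * √(Fintype.card St * T) := by gcongr
end
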